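/- arXiv:1404.1161 — 2 statements merged into one kernel-verified Lean document; each statement's English description precedes it below -/
import Mathlib

section
/- Let N and K be positive integers with 1 ≤ K ≤ N, and let P(n) = (C(N-n+1, K)/C(N, K)) · (K/(N-n+1)). Then the expected number of draws until the first success satisfies ∑_{n=1}^{N-K+1} n · P(n) = (N+1)/(K+1). -/
/-!
Since `C(m + 1, K) · K / (m + 1) = C(m, K - 1)`, the `n`-th term is
`n · C(N - n, K - 1) / C(N, K)`. Writing `n = C(n, 1)`, the upper Chu–Vandermonde identity
`∑ C(i, a) C(n - i, b) = C(n + 1, a + b + 1)` gives `∑ n · C(N - n, K - 1) = C(N + 1, K + 1)`,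
and `C(N + 1, K + 1) / C(N, K) = (N + 1) / (K + 1)`.
-/

open Finset

theorem Nat.sum_antidiagonal_choose_mul_choose (a b n : ℕ) :
    ∑ ij ∈ antidiagonal n, ij.1.choose a * ij.2.choose b = (n + 1).choose (a + b + 1) := by
  induction n generalizing a with
  | zero => cases a <;> cases b <;> simp [choose_eq_zero_of_lt]
  | succ n ih =>
    rw [Finset.Nat.sum_antidiagonal_succ]
    cases a with
    | zero =>
      have := ih 0
      simp only [choose_zero_right, one_mul, zero_add] at this ⊢
      rw [this, choose_succ_succ (n + 1) b]
    | succ a =>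
      simp only [choose_zero_succ, zero_mul, zero_add, choose_succ_succ' _ a, add_mul,
        sum_add_distrib, ih]
      rw [choose_succ_succ' (n + 1) (a + 1 + b), Nat.add_right_comm a 1 b]

theorem Nat.sum_range_choose_mul_choose (a b n : ℕ) :
    ∑ i ∈ range (n + 1), i.choose a * (n - i).choose b = (n + 1).choose (a + b + 1) := by
  rw [← Nat.sum_antidiagonal_choose_mul_choose, Finset.Nat.sum_antidiagonal_eq_sum_range_succ_mk]

theorem choose_mul_div_eq_choose {F : Type*} [Field F] [CharZero F] (m k : ℕ) :
    ((m + 1).choose (k + 1) : F) * ((k + 1 : ℕ) / (m + 1 : ℕ)) = m.choose k := by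
  rw [mul_div_assoc', div_eq_iff (Nat.cast_ne_zero.2 m.succ_ne_zero), ← Nat.cast_mul,
    ← Nat.cast_mul, ← Nat.add_one_mul_choose_eq, mul_comm]

theorem Nat.sum_Icc_mul_choose_sub (N k : ℕ) :
    ∑ n ∈ Icc 1 (N - k), n * (N - n).choose k = (N + 1).choose (k + 2) := by
  have hvanish : ∀ n ∈ range (N + 1), n ∉ Icc 1 (N - k) → n * (N - n).choose k = 0 := by
    intro n hnN hn
    obtain rfl | hpos := n.eq_zero_or_pos
    · exact zero_mul _
    · have hlt : N - n < k := by simp only [mem_range, mem_Icc] at hnN hn; omega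
      rw [choose_eq_zero_of_lt hlt, mul_zero]
  have hsub : Icc 1 (N - k) ⊆ range (N + 1) := fun n hn => by
    simp only [mem_range, mem_Icc] at hn ⊢
    omega
  rw [sum_subset hsub hvanish]
  simpa only [choose_one_right, Nat.add_comm 1 k] using Nat.sum_range_choose_mul_choose 1 k N

/-- Expected number of draws until the first success without replacement:
`∑_{n=1}^{N-K+1} n · P(n) = (N+1)/(K+1)`. -/
theorem expected_value_eq (N K : ℕ) (hK : 1 ≤ K) (hKN : K ≤ N) :
    ∑ n ∈ Finset.Icc 1 (N - K + 1),
      (n : ℚ) * ((((N - n + 1).choose K : ℚ) / (N.choose K : ℚ)) * ((K : ℚ) / ((N - n + 1 : ℕ) : ℚ)))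
      = ((N : ℚ) + 1) / ((K : ℚ) + 1) := by
  obtain ⟨k, rfl⟩ : ∃ k, K = k + 1 := ⟨K - 1, by omega⟩
  have hchoose : (N.choose (k + 1) : ℚ) ≠ 0 := Nat.cast_ne_zero.2 (Nat.choose_pos hKN).ne'
  calc _ = ∑ n ∈ Icc 1 (N - k), ((n * (N - n).choose k : ℕ) : ℚ) / N.choose (k + 1) := by
          refine sum_congr (by rw [show N - (k + 1) + 1 = N - k by omega]) fun n _ => ?_
          rw [div_mul_eq_mul_div, choose_mul_div_eq_choose, Nat.cast_mul, mul_div_assoc]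
    _ = ((N + 1).choose (k + 2) : ℚ) / N.choose (k + 1) := by
          rw [← sum_div, ← Nat.cast_sum, Nat.sum_Icc_mul_choose_sub]
    _ = _ := by
          rw [div_eq_div_iff hchoose (by positivity)]
          exact_mod_cast (Nat.add_one_mul_choose_eq N (k + 1)).symm
end

section
/- Let N and K be positive integers with 1 ≤ K ≤ N, and let P(n) = (C(N-n+1, K)/C(N, K)) · (K/(N-n+1)). Then the variance of the number of draws until the first success satisfies ∑_{n=1}^{N-K+1} n² · P(n) − ((N+1)/(K+1))² = K(N−K)(N+1)/((K+2)(K+1)²). -/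
lemma key_sum (N : ℕ) : ∀ k : ℕ,
    ∑ n ∈ Finset.Icc 1 (N - k), (n : ℚ) ^ 2 * ((N - n).choose k : ℚ)
      = 2 * ((N + 2).choose (k + 3) : ℚ) - ((N + 1).choose (k + 2) : ℚ) := by
  induction N with
  | zero =>
    intro k
    rw [Nat.choose_eq_zero_of_lt (by omega), Nat.choose_eq_zero_of_lt (by omega)]
    simp
  | succ N ih =>
    intro k
    by_cases hk : N + 1 ≤ k
    · have h1 : N + 1 - k = 0 := by omega
      rw [h1, Nat.choose_eq_zero_of_lt (by omega), Nat.choose_eq_zero_of_lt (by omega)]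
      simp
    · push_neg at hk
      match k with
      | 0 =>
        have ih0 := ih 0
        simp only [Nat.choose_zero_right, Nat.cast_one, mul_one, Nat.sub_zero] at ih0 ⊢
        rw [Finset.sum_Icc_succ_top (by omega), ih0]
        rw [show (N + 1 + 2).choose 3 = (N + 2).choose 2 + (N + 2).choose 3 from
          Nat.choose_succ_succ _ _,
          show (N + 2).choose 2 = (N + 1).choose 1 + (N + 1).choose 2 from
          Nat.choose_succ_succ _ _]
        push_cast [Nat.choose_one_right, Nat.cast_choose_two]
        ring
      | (j + 1) =>
        have hjN : j + 1 ≤ N := by omega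
        have hrange : N + 1 - (j + 1) = N - j := by omega
        rw [hrange]
        have hstep : ∀ n ∈ Finset.Icc 1 (N - j),
            (n : ℚ) ^ 2 * ((N + 1 - n).choose (j + 1) : ℚ)
              = (n : ℚ) ^ 2 * ((N - n).choose j : ℚ)
                + (n : ℚ) ^ 2 * ((N - n).choose (j + 1) : ℚ) := by
          intro n hn
          simp only [Finset.mem_Icc] at hn
          have h1 : N + 1 - n = (N - n) + 1 := by omega
          rw [h1, Nat.choose_succ_succ]
          push_cast
          ring
        rw [Finset.sum_congr rfl hstep, Finset.sum_add_distrib]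
        have hB : ∑ n ∈ Finset.Icc 1 (N - j), (n : ℚ) ^ 2 * ((N - n).choose (j + 1) : ℚ)
            = ∑ n ∈ Finset.Icc 1 (N - (j + 1)), (n : ℚ) ^ 2 * ((N - n).choose (j + 1) : ℚ) := by
          have h2 : N - j = (N - (j + 1)) + 1 := by omega
          rw [h2, Finset.sum_Icc_succ_top (by omega)]
          have h3 : N - (N - (j + 1) + 1) = j := by omega
          rw [h3, Nat.choose_succ_self]
          simp
        rw [ih j, hB, ih (j + 1)]
        rw [show (N + 1 + 2).choose (j + 1 + 3) = (N + 2).choose (j + 3) + (N + 2).choose (j + 4)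
          from Nat.choose_succ_succ _ _,
          show (N + 1 + 1).choose (j + 1 + 2) = (N + 1).choose (j + 2) + (N + 1).choose (j + 3)
          from Nat.choose_succ_succ _ _]
        push_cast
        ring_nf

/-- Variance of the number of draws until the first success without replacement:
`∑ n² P(n) − ((N+1)/(K+1))² = K (N−K) (N+1) / ((K+2)(K+1)²)`. -/
theorem variance_eq (N K : ℕ) (hK : 1 ≤ K) (hKN : K ≤ N) :
    (∑ n ∈ Finset.Icc 1 (N - K + 1),
      (n : ℚ) ^ 2 * ((((N - n + 1).choose K : ℚ) / (N.choose K : ℚ)) * ((K : ℚ) / ((N - n + 1 : ℕ) : ℚ))))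
      - (((N : ℚ) + 1) / ((K : ℚ) + 1)) ^ 2
      = (K : ℚ) * ((N : ℚ) - (K : ℚ)) * ((N : ℚ) + 1) / (((K : ℚ) + 2) * ((K : ℚ) + 1) ^ 2) := by
  have haN : (0 : ℚ) < (N.choose K : ℚ) := by
    exact_mod_cast Nat.choose_pos hKN
  have ha : (N.choose K : ℚ) ≠ 0 := ne_of_gt haN
  -- rewrite each summand
  have hterm : ∀ n ∈ Finset.Icc 1 (N - K + 1),
      (n : ℚ) ^ 2 * ((((N - n + 1).choose K : ℚ) / (N.choose K : ℚ)) * ((K : ℚ) / ((N - n + 1 : ℕ) : ℚ)))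
        = (n : ℚ) ^ 2 * ((N - n).choose (K - 1) : ℚ) / (N.choose K : ℚ) := by
    intro n hn
    have hd : ((N - n + 1 : ℕ) : ℚ) ≠ 0 := by
      positivity
    have hnat : (N - n + 1) * (N - n).choose (K - 1) = (N - n + 1).choose K * K := by
      have h := Nat.add_one_mul_choose_eq (N - n) (K - 1)
      have hK1 : K - 1 + 1 = K := by omega
      simpa only [Nat.succ_eq_add_one, hK1] using h
    have hq : ((N - n + 1 : ℕ) : ℚ) * ((N - n).choose (K - 1) : ℚ)
        = ((N - n + 1).choose K : ℚ) * K := by exact_mod_cast hnat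
    have hkey : (((N - n + 1).choose K : ℚ) * K) / ((N.choose K : ℚ) * ((N - n + 1 : ℕ) : ℚ))
        = ((N - n).choose (K - 1) : ℚ) / (N.choose K : ℚ) := by
      rw [div_eq_div_iff (by positivity) ha]
      linear_combination (-(N.choose K : ℚ)) * hq
    rw [div_mul_div_comm, hkey, mul_div_assoc]
  rw [Finset.sum_congr rfl hterm, ← Finset.sum_div]
  have hrange : N - K + 1 = N - (K - 1) := by omega
  rw [hrange, key_sum N (K - 1)]
  have h1 : K - 1 + 3 = K + 2 := by omega
  have h2 : K - 1 + 2 = K + 1 := by omega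
  rw [h1, h2]
  -- cast identities for binomials
  have hb : ((N + 1).choose (K + 1) : ℚ) * (K + 1) = (N.choose K : ℚ) * (N + 1) := by
    have h := Nat.add_one_mul_choose_eq N K
    have h2 : (N + 1) * N.choose K = (N + 1).choose (K + 1) * (K + 1) := by
      simpa [Nat.succ_eq_add_one] using h
    have h3 : ((N + 1 : ℕ) : ℚ) * (N.choose K : ℚ) = ((N + 1).choose (K + 1) : ℚ) * ((K + 1 : ℕ) : ℚ) := by
      exact_mod_cast congrArg (Nat.cast : ℕ → ℚ) h2
    push_cast at h3
    linear_combination -h3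
  have hc : ((N + 2).choose (K + 2) : ℚ) * (K + 2) = ((N + 1).choose (K + 1) : ℚ) * (N + 2) := by
    have h := Nat.add_one_mul_choose_eq (N + 1) (K + 1)
    have h2 : (N + 2) * (N + 1).choose (K + 1) = (N + 2).choose (K + 2) * (K + 2) := by
      simpa [Nat.succ_eq_add_one] using h
    have h3 : ((N + 2 : ℕ) : ℚ) * ((N + 1).choose (K + 1) : ℚ) = ((N + 2).choose (K + 2) : ℚ) * ((K + 2 : ℕ) : ℚ) := by
      exact_mod_cast congrArg (Nat.cast : ℕ → ℚ) h2
    push_cast at h3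
    linear_combination -h3
  have hK1 : ((K : ℚ) + 1) ≠ 0 := by positivity
  have hK2 : ((K : ℚ) + 2) ≠ 0 := by positivity
  have hbval : ((N + 1).choose (K + 1) : ℚ) = (N.choose K : ℚ) * (N + 1) / (K + 1) := by
    field_simp
    linarith [hb]
  have hcval : ((N + 2).choose (K + 2) : ℚ)
      = (N.choose K : ℚ) * (N + 1) * (N + 2) / ((K + 1) * (K + 2)) := by
    rw [eq_div_iff (by positivity)]
    calc ((N + 2).choose (K + 2) : ℚ) * ((K + 1) * (K + 2))
        = ((N + 2).choose (K + 2) : ℚ) * (K + 2) * (K + 1) := by ring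
      _ = ((N + 1).choose (K + 1) : ℚ) * (N + 2) * (K + 1) := by rw [hc]
      _ = ((N + 1).choose (K + 1) : ℚ) * (K + 1) * (N + 2) := by ring
      _ = (N.choose K : ℚ) * (N + 1) * (N + 2) := by rw [hb]
  rw [hbval, hcval]
  field_simp
  ring
end
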